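/- arXiv:1711.03789 — 4 statements merged into one kernel-verified Lean document; each statement's English description precedes it below -/
import Mathlib

section
/- Let V be a complex Hilbert space with inner product (·,·) and norm ‖·‖, a_ξ a continuous sesquilinear form with |a_ξ(u,v)| ≤ C_c‖u‖‖v‖, coercive with Im(Θ a_ξ(v,v)) ≥ γ‖v‖² for some |Θ| = 1 and γ > 0. Let V⁰,…,V^N be closed subspaces of V, and for each ℓ let T^ℓ : V → V^ℓ be the a_ξ-projection defined by a_ξ(T^ℓ v, w) = a_ξ(v, w) for all w ∈ V^ℓ. Assume the norm-of-sum bound ‖∑_{ℓ=0}^N u^ℓ‖² ≤ K ∑_{ℓ=0}^N ‖u^ℓ‖² for all choices u^ℓ ∈ V^ℓ. Then with T := ∑_{ℓ=0}^N T^ℓ, one has ‖T v‖ ≤ K (C_c/γ) ‖v‖ for all v ∈ V. -/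
/-! Testing the defining relation of `T ℓ v` against `T ℓ v` itself and summing, coercivity and
continuity give `γ ∑ ‖T ℓ v‖² ≤ C_c ‖v‖ ‖∑ T ℓ v‖`; the norm-of-sum bound turns the left side into
a lower bound `(γ/K) ‖∑ T ℓ v‖²`, and dividing by `‖∑ T ℓ v‖` gives the claim. -/

open Finset

lemma le_mul_div_of_sq_le_of_mul_le {x s c K γ : ℝ} (hγ : 0 < γ) (hK : 0 ≤ K) (hc : 0 ≤ c)
    (hx : 0 ≤ x) (hxs : x ^ 2 ≤ K * s) (hsc : γ * s ≤ c * x) : x ≤ K * (c / γ) := by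
  have hs : s ≤ c * x / γ := by rw [le_div_iff₀ hγ]; linarith
  have hxx : x * x ≤ K * (c / γ) * x := by
    calc x * x = x ^ 2 := (sq x).symm
      _ ≤ K * (c * x / γ) := hxs.trans (mul_le_mul_of_nonneg_left hs hK)
      _ = K * (c / γ) * x := by ring
  rcases hx.eq_or_lt with rfl | hx
  · positivity
  · exact le_of_mul_le_mul_right hxx hx

lemma mul_sum_norm_sq_le_of_galerkin {ι V : Type*} [Fintype ι] [SeminormedAddCommGroup V]
    (a : V → V → ℂ) (Cc γ : ℝ) (Θ : ℂ) (hΘ : ‖Θ‖ = 1)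
    (hadd : ∀ u v w : V, a u (v + w) = a u v + a u w)
    (hcont : ∀ u v : V, ‖a u v‖ ≤ Cc * ‖u‖ * ‖v‖)
    (hcoer : ∀ v : V, γ * ‖v‖ ^ 2 ≤ (Θ * a v v).im)
    (P : ι → V) (v : V) (hgal : ∀ ℓ, a (P ℓ) (P ℓ) = a v (P ℓ)) :
    γ * ∑ ℓ, ‖P ℓ‖ ^ 2 ≤ Cc * ‖v‖ * ‖∑ ℓ, P ℓ‖ := by
  have hmap : a v (∑ ℓ, P ℓ) = ∑ ℓ, a v (P ℓ) :=
    map_sum (AddMonoidHom.mk' (a v) (hadd v)) P univ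
  calc γ * ∑ ℓ, ‖P ℓ‖ ^ 2 = ∑ ℓ, γ * ‖P ℓ‖ ^ 2 := mul_sum _ _ _
    _ ≤ ∑ ℓ, (Θ * a (P ℓ) (P ℓ)).im := sum_le_sum fun ℓ _ => hcoer (P ℓ)
    _ = (Θ * a v (∑ ℓ, P ℓ)).im := by
      simp only [hgal, hmap, mul_sum, Complex.im_sum]
    _ ≤ ‖Θ * a v (∑ ℓ, P ℓ)‖ := Complex.im_le_norm _
    _ = ‖a v (∑ ℓ, P ℓ)‖ := by rw [norm_mul, hΘ, one_mul]
    _ ≤ Cc * ‖v‖ * ‖∑ ℓ, P ℓ‖ := hcont _ _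

theorem stmt6_general {V : Type*} [NormedAddCommGroup V] [InnerProductSpace ℂ V]
    (N : ℕ) (a : V → V → ℂ) (Cc γ K : ℝ) (Θ : ℂ)
    (hCc : 0 < Cc) (hγ : 0 < γ) (hK : 0 < K) (hΘ : ‖Θ‖ = 1)
    (hadd : ∀ u v w : V, a u (v + w) = a u v + a u w)
    (hcont : ∀ u v : V, ‖a u v‖ ≤ Cc * ‖u‖ * ‖v‖)
    (hcoer : ∀ v : V, γ * ‖v‖ ^ 2 ≤ (Θ * a v v).im)
    (Vsub : Fin (N + 1) → Submodule ℂ V) (T : Fin (N + 1) → V → V)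
    (hrange : ∀ ℓ v, T ℓ v ∈ Vsub ℓ)
    (hproj : ∀ ℓ (v : V), ∀ w ∈ Vsub ℓ, a (T ℓ v) w = a v w)
    (hsum : ∀ u : Fin (N + 1) → V, (∀ ℓ, u ℓ ∈ Vsub ℓ) →
      ‖∑ ℓ, u ℓ‖ ^ 2 ≤ K * ∑ ℓ, ‖u ℓ‖ ^ 2) :
    ∀ v : V, ‖∑ ℓ, T ℓ v‖ ≤ K * (Cc / γ) * ‖v‖ := by
  intro v
  have hcoer_sum : γ * ∑ ℓ, ‖T ℓ v‖ ^ 2 ≤ Cc * ‖v‖ * ‖∑ ℓ, T ℓ v‖ :=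
    mul_sum_norm_sq_le_of_galerkin a Cc γ Θ hΘ hadd hcont hcoer (fun ℓ => T ℓ v) v
      fun ℓ => hproj ℓ v (T ℓ v) (hrange ℓ v)
  have hbound : ‖∑ ℓ, T ℓ v‖ ≤ K * (Cc * ‖v‖ / γ) :=
    le_mul_div_of_sq_le_of_mul_le hγ hK.le (by positivity) (norm_nonneg _)
      (hsum (fun ℓ => T ℓ v) fun ℓ => hrange ℓ v) hcoer_sum
  calc ‖∑ ℓ, T ℓ v‖ ≤ K * (Cc * ‖v‖ / γ) := hbound
    _ = K * (Cc / γ) * ‖v‖ := by ring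

/-- Abstract additive Schwarz operator norm bound: with a continuous (constant `C_c`),
coercive (`Im(Θ a(v,v)) ≥ γ‖v‖²`, `|Θ| = 1`) sesquilinear form `a`, `a`-projections
`T ℓ` onto subspaces `Vsub ℓ`, and the norm-of-sum bound with constant `K`, the operator
`T = ∑ T ℓ` satisfies `‖T v‖ ≤ K (C_c/γ) ‖v‖`. -/
theorem stmt6 {V : Type*} [NormedAddCommGroup V] [InnerProductSpace ℂ V] [CompleteSpace V]
    (N : ℕ) (a : V → V → ℂ) (Cc γ K : ℝ) (Θ : ℂ)
    (hCc : 0 < Cc) (hγ : 0 < γ) (hK : 0 < K) (hΘ : ‖Θ‖ = 1)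
    (hadd : ∀ u v w : V, a u (v + w) = a u v + a u w)
    (hcont : ∀ u v : V, ‖a u v‖ ≤ Cc * ‖u‖ * ‖v‖)
    (hcoer : ∀ v : V, γ * ‖v‖ ^ 2 ≤ (Θ * a v v).im)
    (Vsub : Fin (N + 1) → Submodule ℂ V) (T : Fin (N + 1) → V → V)
    (hrange : ∀ ℓ v, T ℓ v ∈ Vsub ℓ)
    (hproj : ∀ ℓ (v : V), ∀ w ∈ Vsub ℓ, a (T ℓ v) w = a v w)
    (hsum : ∀ u : Fin (N + 1) → V, (∀ ℓ, u ℓ ∈ Vsub ℓ) →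
      ‖∑ ℓ, u ℓ‖ ^ 2 ≤ K * ∑ ℓ, ‖u ℓ‖ ^ 2) :
    ∀ v : V, ‖∑ ℓ, T ℓ v‖ ≤ K * (Cc / γ) * ‖v‖ :=
  stmt6_general N a Cc γ K Θ hCc hγ hK hΘ hadd hcont hcoer Vsub T hrange hproj hsum
end

section
/- Under the hypotheses of the previous abstract setting (continuity constant C_c, coercivity constant γ with unimodular Θ, a_ξ-projections T^ℓ onto subspaces V^ℓ), assume additionally the stable splitting property: every v ∈ V admits a decomposition v = ∑_{ℓ=0}^N v^ℓ with v^ℓ ∈ V^ℓ and ∑_ℓ ‖v^ℓ‖² ≤ K₀‖v‖². Then ∑_{ℓ=0}^N ‖T^ℓ v‖² ≥ (γ²/(C_c² K₀)) ‖v‖² for all v ∈ V. -/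
/-!
Split `v = ∑ uˡ` stably. Coercivity, the projection property `a(Tˡv, uˡ) = a(v, uˡ)` and continuity
give `γ‖v‖² ≤ ‖a(v, v)‖ = ‖∑ a(Tˡv, uˡ)‖ ≤ C_c ∑ ‖Tˡv‖ ‖uˡ‖`, and Cauchy–Schwarz together with
`∑ ‖uˡ‖² ≤ K₀‖v‖²` bounds the right-hand side by `C_c (∑ ‖Tˡv‖²)^{1/2} K₀^{1/2} ‖v‖`.
-/

open Finset

section

variable {ι V : Type*} [Fintype ι]

theorem div_mul_sq_le_sum_sq_of_le_sum_mul {γ C K x : ℝ} {p q : ι → ℝ} (hγ : 0 ≤ γ) (hK : 0 ≤ K)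
    (h : γ * x ^ 2 ≤ C * ∑ i, p i * q i) (hq : ∑ i, q i ^ 2 ≤ K * x ^ 2) :
    γ ^ 2 / (C ^ 2 * K) * x ^ 2 ≤ ∑ i, p i ^ 2 := by
  have hS : 0 ≤ ∑ i, p i ^ 2 := sum_nonneg fun i _ => sq_nonneg _
  rcases eq_or_ne x 0 with rfl | hx
  · simpa using hS
  have hsq : (γ * x ^ 2) ^ 2 ≤ C ^ 2 * K * (∑ i, p i ^ 2) * x ^ 2 :=
    calc (γ * x ^ 2) ^ 2 ≤ (C * ∑ i, p i * q i) ^ 2 := pow_le_pow_left₀ (by positivity) h 2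
      _ = C ^ 2 * (∑ i, p i * q i) ^ 2 := mul_pow _ _ _
      _ ≤ C ^ 2 * ((∑ i, p i ^ 2) * ∑ i, q i ^ 2) := by
          gcongr; exact sum_mul_sq_le_sq_mul_sq _ _ _
      _ ≤ C ^ 2 * ((∑ i, p i ^ 2) * (K * x ^ 2)) := by gcongr
      _ = C ^ 2 * K * (∑ i, p i ^ 2) * x ^ 2 := by ring
  have hγx : γ ^ 2 * x ^ 2 ≤ (∑ i, p i ^ 2) * (C ^ 2 * K) := by
    have hx2 : 0 < x ^ 2 := by positivity
    nlinarith
  rw [div_mul_eq_mul_div]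
  exact div_le_of_le_mul₀ (by positivity) hS hγx

variable [NormedAddCommGroup V] {a : V → V → ℂ} {γ C : ℝ} {Θ : ℂ}

theorem mul_norm_sq_le_norm_of_coercive (hΘ : ‖Θ‖ = 1) {v : V}
    (hcoer : γ * ‖v‖ ^ 2 ≤ (Θ * a v v).im) : γ * ‖v‖ ^ 2 ≤ ‖a v v‖ :=
  calc γ * ‖v‖ ^ 2 ≤ (Θ * a v v).im := hcoer
    _ ≤ ‖Θ * a v v‖ := Complex.im_le_norm _
    _ = ‖a v v‖ := by rw [norm_mul, hΘ, one_mul]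

theorem mul_norm_sq_le_sum_norm_mul (hadd : ∀ u v w : V, a u (v + w) = a u v + a u w)
    (hcont : ∀ u v : V, ‖a u v‖ ≤ C * ‖u‖ * ‖v‖) (hΘ : ‖Θ‖ = 1) {v : V}
    (hcoer : γ * ‖v‖ ^ 2 ≤ (Θ * a v v).im) {u w : ι → V} (hu : ∑ i, u i = v)
    (hw : ∀ i, a (w i) (u i) = a v (u i)) :
    γ * ‖v‖ ^ 2 ≤ C * ∑ i, ‖w i‖ * ‖u i‖ := by
  have hsplit : a v v = ∑ i, a (w i) (u i) :=
    calc a v v = a v (∑ i, u i) := by rw [hu]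
      _ = ∑ i, a v (u i) := map_sum (AddMonoidHom.mk' (a v) (hadd v)) u univ
      _ = ∑ i, a (w i) (u i) := sum_congr rfl fun i _ => (hw i).symm
  calc γ * ‖v‖ ^ 2 ≤ ‖a v v‖ := mul_norm_sq_le_norm_of_coercive hΘ hcoer
    _ ≤ ∑ i, ‖a (w i) (u i)‖ := hsplit ▸ norm_sum_le _ _
    _ ≤ ∑ i, C * ‖w i‖ * ‖u i‖ := sum_le_sum fun i _ => hcont _ _
    _ = C * ∑ i, ‖w i‖ * ‖u i‖ := by simp only [mul_assoc, mul_sum]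

end

theorem stmt7_general {V : Type*} [NormedAddCommGroup V] [InnerProductSpace ℂ V]
    (N : ℕ) (a : V → V → ℂ) (Cc γ K₀ : ℝ) (Θ : ℂ)
    (hγ : 0 < γ) (hK₀ : 0 < K₀) (hΘ : ‖Θ‖ = 1)
    (hadd : ∀ u v w : V, a u (v + w) = a u v + a u w)
    (hcont : ∀ u v : V, ‖a u v‖ ≤ Cc * ‖u‖ * ‖v‖)
    (hcoer : ∀ v : V, γ * ‖v‖ ^ 2 ≤ (Θ * a v v).im)
    (Vsub : Fin (N + 1) → Submodule ℂ V) (T : Fin (N + 1) → V → V)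
    (hproj : ∀ ℓ (v : V), ∀ w ∈ Vsub ℓ, a (T ℓ v) w = a v w)
    (hsplit : ∀ v : V, ∃ u : Fin (N + 1) → V, (∀ ℓ, u ℓ ∈ Vsub ℓ) ∧
      (∑ ℓ, u ℓ) = v ∧ (∑ ℓ, ‖u ℓ‖ ^ 2) ≤ K₀ * ‖v‖ ^ 2) :
    ∀ v : V, (γ ^ 2 / (Cc ^ 2 * K₀)) * ‖v‖ ^ 2 ≤ ∑ ℓ, ‖T ℓ v‖ ^ 2 := by
  intro v
  obtain ⟨u, hu_mem, hu_sum, hu_norm⟩ := hsplit v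
  have hest : γ * ‖v‖ ^ 2 ≤ Cc * ∑ ℓ, ‖T ℓ v‖ * ‖u ℓ‖ :=
    mul_norm_sq_le_sum_norm_mul hadd hcont hΘ (hcoer v) hu_sum
      fun ℓ => hproj ℓ v (u ℓ) (hu_mem ℓ)
  exact div_mul_sq_le_sum_sq_of_le_sum_mul hγ.le hK₀.le hest hu_norm

/-- Abstract lower bound (Lemma 4.5): under continuity (`C_c`), coercivity
(`Im(Θ a(v,v)) ≥ γ‖v‖²`, `|Θ| = 1`), the `a`-projection property, and the stable
splitting property with constant `K₀`, one has `∑ ‖T ℓ v‖² ≥ (γ²/(C_c² K₀)) ‖v‖²`. -/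
theorem stmt7 {V : Type*} [NormedAddCommGroup V] [InnerProductSpace ℂ V] [CompleteSpace V]
    (N : ℕ) (a : V → V → ℂ) (Cc γ K₀ : ℝ) (Θ : ℂ)
    (hCc : 0 < Cc) (hγ : 0 < γ) (hK₀ : 0 < K₀) (hΘ : ‖Θ‖ = 1)
    (hadd : ∀ u v w : V, a u (v + w) = a u v + a u w)
    (hcont : ∀ u v : V, ‖a u v‖ ≤ Cc * ‖u‖ * ‖v‖)
    (hcoer : ∀ v : V, γ * ‖v‖ ^ 2 ≤ (Θ * a v v).im)
    (Vsub : Fin (N + 1) → Submodule ℂ V) (T : Fin (N + 1) → V → V)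
    (hrange : ∀ ℓ v, T ℓ v ∈ Vsub ℓ)
    (hproj : ∀ ℓ (v : V), ∀ w ∈ Vsub ℓ, a (T ℓ v) w = a v w)
    (hsplit : ∀ v : V, ∃ u : Fin (N + 1) → V, (∀ ℓ, u ℓ ∈ Vsub ℓ) ∧
      (∑ ℓ, u ℓ) = v ∧ (∑ ℓ, ‖u ℓ‖ ^ 2) ≤ K₀ * ‖v‖ ^ 2) :
    ∀ v : V, (γ ^ 2 / (Cc ^ 2 * K₀)) * ‖v‖ ^ 2 ≤ ∑ ℓ, ‖T ℓ v‖ ^ 2 :=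
  stmt7_general N a Cc γ K₀ Θ hγ hK₀ hΘ hadd hcont hcoer Vsub T hproj hsplit
end

section
/- For β = π/2 − ε with ε → 0⁺, sin β = cos ε = 1 − ε²/2 + O(ε⁴), whereas γ_β = 2 sin(β/(4 − 2β/π)) = 1 − 4ε/(3√3) + O(ε²). Hence for all sufficiently small ε > 0, γ_β < sin β, i.e., the Beckermann–Goreinov–Tyrtyshnikov convergence factor is strictly smaller than the classical Elman factor. -/
open Real Filter Asymptotics

open scoped Topology

/-!
The argument of the sine in `γ_β` is `π/6 - δ` with `δ = 4πε/(3(3π + 2ε)) = 4ε/9 + O(ε²)`,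
and `2 sin (π/6 - δ) = cos δ - √3 sin δ = 1 - √3 δ + O(δ²)`; this gives the expansion of `γ_β`.
So `γ_β` falls below `1` linearly in `ε`, while `sin β = cos ε` does so only quadratically.
-/

theorem cos_sub_one_sub_sq_div_two_isBigO :
    (fun x : ℝ => cos x - (1 - x ^ 2 / 2)) =O[𝓝 0] fun x => x ^ 4 :=
  IsBigO.of_bound (5 / 96) <| by
    filter_upwards [Icc_mem_nhds (neg_lt_zero.2 one_pos) one_pos] with x hx
    simpa [abs_pow, mul_comm] using cos_bound (abs_le.2 hx)

theorem cos_sub_one_isBigO : (fun x : ℝ => cos x - 1) =O[𝓝 0] fun x => x ^ 2 :=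
  isBigO_of_le' (c := 1 / 2) _ fun x => by
    rw [norm_eq_abs, abs_sub_comm, abs_of_nonneg (sub_nonneg.2 (cos_le_one x)), norm_pow,
      norm_eq_abs, sq_abs]
    linarith [one_sub_sq_div_two_le_cos (x := x)]

theorem sin_sub_self_isBigO : (fun x : ℝ => sin x - x) =O[𝓝 0] fun x => x ^ 3 := by
  have hquintic : (fun x : ℝ => sin x - (x - x ^ 3 / 6)) =O[𝓝 0] fun x => x ^ 5 :=
    IsBigO.of_bound (1 / 100) <| by
      filter_upwards [Icc_mem_nhds (neg_lt_zero.2 one_pos) one_pos] with x hx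
      simpa [abs_pow, div_eq_mul_inv, mul_comm] using sin_bound (abs_le.2 hx)
  have hcubic : (fun x : ℝ => x ^ 3 / 6) =O[𝓝 0] fun x => x ^ 3 :=
    (isBigO_refl _ _).const_mul_left (1 / 6) |>.congr_left fun x => by ring
  exact ((hquintic.trans (isLittleO_pow_pow (by norm_num)).isBigO).sub hcubic).congr_left
    fun x => by ring

theorem isBigO_mul_self_of_tendsto {α 𝕜 : Type*} [NormedField 𝕜] {l : Filter α}
    {f c : α → 𝕜} {a : 𝕜} (hc : Tendsto c l (𝓝 a)) : (fun x => c x * f x) =O[l] f := by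
  simpa using (hc.isBigO_one 𝕜).mul (isBigO_refl f l)

theorem exists_forall_Ioc_of_eventually_nhdsGT {α : Type*} [LinearOrder α] [TopologicalSpace α]
    [OrderTopology α] [NoMaxOrder α] [DenselyOrdered α] {a : α} {p : α → Prop}
    (h : ∀ᶠ x in 𝓝[>] a, p x) : ∃ b > a, ∀ x, a < x → x ≤ b → p x := by
  obtain ⟨b, hab, hb⟩ := mem_nhdsGT_iff_exists_Ioc_subset.1 h
  exact ⟨b, hab, fun x hax hxb => hb ⟨hax, hxb⟩⟩

theorem eventually_pos_mul_add_of_isLittleO {c : ℝ} {R : ℝ → ℝ} (hc : 0 < c)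
    (hR : R =o[𝓝[>] 0] id) : ∀ᶠ x in 𝓝[>] 0, 0 < c * x + R x := by
  filter_upwards [hR.bound (half_pos hc), self_mem_nhdsWithin] with x hRx (hx : 0 < x)
  rw [norm_eq_abs, id, norm_eq_abs, abs_of_pos hx] at hRx
  nlinarith [neg_abs_le (R x)]

noncomputable def gammaFactor (β : ℝ) : ℝ := 2 * sin (β / (4 - 2 * β / π))

theorem pi_div_two_sub_div_four_sub {ε : ℝ} (h : 3 * π + 2 * ε ≠ 0) :
    (π / 2 - ε) / (4 - 2 * (π / 2 - ε) / π) = π / 6 - 4 * π * ε / (3 * (3 * π + 2 * ε)) := by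
  have hπ := pi_ne_zero
  rw [show 4 - 2 * (π / 2 - ε) / π = (3 * π + 2 * ε) / π by field_simp; ring, div_div_eq_mul_div,
    eq_sub_iff_add_eq, div_add_div _ _ h (mul_ne_zero three_ne_zero h),
    div_eq_div_iff (mul_ne_zero h (mul_ne_zero three_ne_zero h)) (by norm_num)]
  ring

theorem two_mul_sin_pi_div_six_sub (x : ℝ) : 2 * sin (π / 6 - x) = cos x - √3 * sin x := by
  rw [sin_sub, sin_pi_div_six, cos_pi_div_six]
  ring

theorem gammaFactor_pi_div_two_sub_isBigO :
    (fun ε => gammaFactor (π / 2 - ε) - (1 - 4 * ε / (3 * √3))) =O[𝓝 0] fun ε => ε ^ 2 := by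
  obtain ⟨d, hd_def⟩ : ∃ d : ℝ → ℝ, ∀ ε, d ε = 4 * π * ε / (3 * (3 * π + 2 * ε)) :=
    ⟨_, fun _ => rfl⟩
  have hden_ne : ∀ᶠ ε : ℝ in 𝓝 0, 3 * π + 2 * ε ≠ 0 :=
    (show ContinuousAt (fun ε : ℝ => 3 * π + 2 * ε) 0 by fun_prop).eventually_ne (by positivity)
  have hd : d =O[𝓝 0] id := by
    have hc : ContinuousAt (fun ε : ℝ => 4 * π / (3 * (3 * π + 2 * ε))) 0 := by
      fun_prop (disch := positivity)
    refine (isBigO_mul_self_of_tendsto (f := id) hc.tendsto).congr_left fun ε => ?_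
    rw [hd_def, id]
    ring
  have hd0 : Tendsto d (𝓝 0) (𝓝 0) := hd.trans_tendsto tendsto_id
  have hcos : (fun ε => cos (d ε) - 1) =O[𝓝 0] fun ε => ε ^ 2 :=
    (cos_sub_one_isBigO.comp_tendsto hd0).trans (hd.pow 2)
  have hsin : (fun ε => √3 * (sin (d ε) - d ε)) =O[𝓝 0] fun ε => ε ^ 2 :=
    (((sin_sub_self_isBigO.comp_tendsto hd0).trans (hd.pow 3)).trans
      (isLittleO_pow_pow (by norm_num)).isBigO).const_mul_left √3
  have hlin : (fun ε => √3 * (d ε - 4 * ε / 9)) =O[𝓝 0] fun ε => ε ^ 2 := by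
    have hc : ContinuousAt (fun ε : ℝ => -8 * √3 / (9 * (3 * π + 2 * ε))) 0 := by
      fun_prop (disch := positivity)
    refine (isBigO_mul_self_of_tendsto (f := fun ε => ε ^ 2) hc.tendsto).congr' ?_ .rfl
    filter_upwards [hden_ne] with ε hε
    rw [hd_def]
    field_simp
    ring
  refine ((hcos.sub hsin).sub hlin).congr' ?_ .rfl
  filter_upwards [hden_ne] with ε hε
  have hs3 : √3 ^ 2 = 3 := sq_sqrt (by norm_num)
  rw [gammaFactor, pi_div_two_sub_div_four_sub hε, ← hd_def, two_mul_sin_pi_div_six_sub]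
  field_simp
  linear_combination (12 * ε) * hs3

/-- For `β = π/2 − ε` as `ε → 0⁺`: `sin β = cos ε = 1 − ε²/2 + O(ε⁴)`, while
`γ_β = 2 sin(β/(4 − 2β/π)) = 1 − 4ε/(3√3) + O(ε²)`; hence for all sufficiently small
`ε > 0` one has `γ_β < sin β` (the improved convergence factor beats the Elman one). -/
theorem stmt12 :
    (∀ ε : ℝ, Real.sin (π / 2 - ε) = Real.cos ε) ∧
    (fun ε : ℝ => Real.cos ε - (1 - ε ^ 2 / 2))
      =O[nhdsWithin 0 (Set.Ioi 0)] (fun ε : ℝ => ε ^ 4) ∧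
    (fun ε : ℝ =>
        2 * Real.sin ((π / 2 - ε) / (4 - 2 * (π / 2 - ε) / π))
          - (1 - 4 * ε / (3 * Real.sqrt 3)))
      =O[nhdsWithin 0 (Set.Ioi 0)] (fun ε : ℝ => ε ^ 2) ∧
    ∃ ε₁ > (0:ℝ), ∀ ε : ℝ, 0 < ε → ε ≤ ε₁ →
      2 * Real.sin ((π / 2 - ε) / (4 - 2 * (π / 2 - ε) / π)) < Real.sin (π / 2 - ε) := by
  have hcos := cos_sub_one_sub_sq_div_two_isBigO
  have hγ := gammaFactor_pi_div_two_sub_isBigO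
  refine ⟨sin_pi_div_two_sub, hcos.mono nhdsWithin_le_nhds, hγ.mono nhdsWithin_le_nhds,
    exists_forall_Ioc_of_eventually_nhdsGT ?_⟩
  have hR : (fun ε => cos ε - (1 - ε ^ 2 / 2) - 1 / 2 * ε ^ 2
      - (gammaFactor (π / 2 - ε) - (1 - 4 * ε / (3 * √3)))) =o[𝓝 0] id :=
    ((hcos.trans_isLittleO (isLittleO_pow_id (by norm_num))).sub
      ((isLittleO_pow_id (by norm_num)).const_mul_left _)).sub
      (hγ.trans_isLittleO (isLittleO_pow_id (by norm_num)))
  filter_upwards [eventually_pos_mul_add_of_isLittleO (c := 4 / (3 * √3)) (by positivity)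
    (hR.mono nhdsWithin_le_nhds)] with ε hε
  rw [sin_pi_div_two_sub]
  change gammaFactor (π / 2 - ε) < cos ε
  linarith [show 4 / (3 * √3) * ε = 4 * ε / (3 * √3) by ring]
end

section
/- Let D be an n×n Hermitian positive definite matrix, and A, B invertible n×n complex matrices. Then for every nonzero V ∈ ℂⁿ, with W := D⁻¹V, one has ⟨V, A B⁻¹ V⟩_{D⁻¹} / ⟨V, V⟩_{D⁻¹} = conj( ⟨W, (B*)⁻¹ A* W⟩_D / ⟨W, W⟩_D ). Consequently, the field of values of A B⁻¹ with respect to D⁻¹ equals the complex conjugate of the field of values of (B*)⁻¹A* with respect to D; in particular dist(0, W_{D⁻¹}(AB⁻¹)) = dist(0, W_D((B*)⁻¹A*)). -/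
open Matrix
open scoped ComplexOrder

private lemma stmt14_aux1 {n : ℕ} (D M : Matrix (Fin n) (Fin n) ℂ) (hD : D.IsHermitian)
    (hDu : IsUnit D.det) (w : Fin n → ℂ) :
    star (D.mulVec w) ⬝ᵥ D⁻¹.mulVec (M.mulVec (D.mulVec w)) = star w ⬝ᵥ (M * D).mulVec w := by
  rw [star_mulVec, dotProduct_mulVec, vecMul_vecMul]
  rw [show Dᴴ * D⁻¹ = 1 by rw [hD.eq, Matrix.mul_nonsing_inv D hDu]]
  simp [mulVec_mulVec, dotProduct_mulVec]

private lemma stmt14_aux2 {n : ℕ} (D N : Matrix (Fin n) (Fin n) ℂ) (hD : D.IsHermitian)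
    (w : Fin n → ℂ) :
    star (star w ⬝ᵥ (D * N).mulVec w) = star w ⬝ᵥ (Nᴴ * D).mulVec w := by
  rw [star_dotProduct, star_star, dotProduct_mulVec, star_mulVec, conjTranspose_mul, hD.eq]

private lemma stmt14_aux4 {n : ℕ} (M : Matrix (Fin n) (Fin n) ℂ) (hM : M.IsHermitian)
    (v : Fin n → ℂ) : star (M.mulVec v) ⬝ᵥ v = star v ⬝ᵥ M.mulVec v := by
  rw [star_mulVec, ← dotProduct_mulVec, hM.eq]

private lemma stmt14_num {n : ℕ} (A B D : Matrix (Fin n) (Fin n) ℂ) (hD : D.IsHermitian)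
    (hDu : IsUnit D.det) (w : Fin n → ℂ) :
    star (D.mulVec w) ⬝ᵥ D⁻¹.mulVec ((A * B⁻¹).mulVec (D.mulVec w))
      = star (star w ⬝ᵥ D.mulVec (((Bᴴ)⁻¹ * Aᴴ).mulVec w)) := by
  rw [stmt14_aux1 D (A * B⁻¹) hD hDu w]
  rw [show D.mulVec (((Bᴴ)⁻¹ * Aᴴ).mulVec w) = (D * ((Bᴴ)⁻¹ * Aᴴ)).mulVec w by
    rw [mulVec_mulVec]]
  rw [stmt14_aux2 D ((Bᴴ)⁻¹ * Aᴴ) hD w]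
  congr 2
  rw [conjTranspose_mul, conjTranspose_conjTranspose, conjTranspose_nonsing_inv,
    conjTranspose_conjTranspose]

private lemma stmt14_den {n : ℕ} (D : Matrix (Fin n) (Fin n) ℂ) (hD : D.IsHermitian)
    (hDu : IsUnit D.det) (w : Fin n → ℂ) :
    star (D.mulVec w) ⬝ᵥ D⁻¹.mulVec (D.mulVec w) = star w ⬝ᵥ D.mulVec w := by
  have := stmt14_aux1 D 1 hD hDu w
  simpa using this

private lemma stmt14_den' {n : ℕ} (D : Matrix (Fin n) (Fin n) ℂ) (hD : D.IsHermitian)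
    (w : Fin n → ℂ) :
    star (star w ⬝ᵥ D.mulVec w) = star w ⬝ᵥ D.mulVec w := by
  have := stmt14_aux2 D 1 hD w
  simpa using this

/-- Right vs. left preconditioned fields of values (Theorem 5.8): with `D` Hermitian
positive definite and `A, B` invertible, for `V ≠ 0` and `W = D⁻¹V`,
`⟨V, AB⁻¹V⟩_{D⁻¹}/⟨V,V⟩_{D⁻¹} = conj(⟨W, (Bᴴ)⁻¹Aᴴ W⟩_D/⟨W,W⟩_D)`; consequently the
`D⁻¹`-field of values of `AB⁻¹` is the conjugate of the `D`-field of values of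
`(Bᴴ)⁻¹Aᴴ`, and the distances of these sets to the origin agree. -/
theorem stmt14 (n : ℕ) (A B D : Matrix (Fin n) (Fin n) ℂ)
    (hD : D.PosDef) (hA : IsUnit A.det) (hB : IsUnit B.det) :
    (∀ V : Fin n → ℂ, V ≠ 0 →
      (star V ⬝ᵥ D⁻¹.mulVec ((A * B⁻¹).mulVec V)) / (star V ⬝ᵥ D⁻¹.mulVec V)
        = (starRingEnd ℂ)
            ((star (D⁻¹.mulVec V) ⬝ᵥ D.mulVec (((Bᴴ)⁻¹ * Aᴴ).mulVec (D⁻¹.mulVec V)))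
              / (star (D⁻¹.mulVec V) ⬝ᵥ D.mulVec (D⁻¹.mulVec V)))) ∧
    ({z : ℂ | ∃ v : Fin n → ℂ, Real.sqrt ((star v ⬝ᵥ D⁻¹.mulVec v).re) = 1 ∧
        z = star v ⬝ᵥ D⁻¹.mulVec ((A * B⁻¹).mulVec v)}
      = (starRingEnd ℂ) '' {z : ℂ | ∃ v : Fin n → ℂ,
          Real.sqrt ((star v ⬝ᵥ D.mulVec v).re) = 1 ∧
          z = star v ⬝ᵥ D.mulVec (((Bᴴ)⁻¹ * Aᴴ).mulVec v)}) ∧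
    Metric.infDist 0 {z : ℂ | ∃ v : Fin n → ℂ,
        Real.sqrt ((star v ⬝ᵥ D⁻¹.mulVec v).re) = 1 ∧
        z = star v ⬝ᵥ D⁻¹.mulVec ((A * B⁻¹).mulVec v)}
      = Metric.infDist 0 {z : ℂ | ∃ v : Fin n → ℂ,
          Real.sqrt ((star v ⬝ᵥ D.mulVec v).re) = 1 ∧
          z = star v ⬝ᵥ D.mulVec (((Bᴴ)⁻¹ * Aᴴ).mulVec v)} := by
  have hH : D.IsHermitian := hD.isHermitian
  have hDu : IsUnit D.det := hD.det_pos.ne'.isUnit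
  have hDW : ∀ V : Fin n → ℂ, D.mulVec (D⁻¹.mulVec V) = V := by
    intro V
    rw [mulVec_mulVec, Matrix.mul_nonsing_inv D hDu, one_mulVec]
  have hset : {z : ℂ | ∃ v : Fin n → ℂ, Real.sqrt ((star v ⬝ᵥ D⁻¹.mulVec v).re) = 1 ∧
        z = star v ⬝ᵥ D⁻¹.mulVec ((A * B⁻¹).mulVec v)}
      = (starRingEnd ℂ) '' {z : ℂ | ∃ v : Fin n → ℂ,
          Real.sqrt ((star v ⬝ᵥ D.mulVec v).re) = 1 ∧
          z = star v ⬝ᵥ D.mulVec (((Bᴴ)⁻¹ * Aᴴ).mulVec v)} := by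
    ext z
    constructor
    · rintro ⟨v, hv1, rfl⟩
      refine ⟨star (D⁻¹.mulVec v) ⬝ᵥ D.mulVec (((Bᴴ)⁻¹ * Aᴴ).mulVec (D⁻¹.mulVec v)),
        ⟨D⁻¹.mulVec v, ?_, rfl⟩, ?_⟩
      · rw [hDW v, stmt14_aux4 D⁻¹ hH.inv v]
        exact hv1
      · have := stmt14_num A B D hH hDu (D⁻¹.mulVec v)
        rw [hDW v] at this
        rw [starRingEnd_apply, ← this]
    · rintro ⟨z', ⟨w, hw1, rfl⟩, rfl⟩
      refine ⟨D.mulVec w, ?_, ?_⟩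
      · rw [stmt14_den D hH hDu w]
        exact hw1
      · rw [stmt14_num A B D hH hDu w, starRingEnd_apply]
  refine ⟨?_, hset, ?_⟩
  · intro V _
    have hnum := stmt14_num A B D hH hDu (D⁻¹.mulVec V)
    rw [hDW V] at hnum
    rw [map_div₀]
    rw [hnum, starRingEnd_apply]
    congr 1
    rw [starRingEnd_apply, stmt14_den' D hH (D⁻¹.mulVec V), hDW V,
      stmt14_aux4 D⁻¹ hH.inv V]
  · rw [hset]
    have := Metric.infDist_image (x := (0 : ℂ))
      (t := {z : ℂ | ∃ v : Fin n → ℂ, Real.sqrt ((star v ⬝ᵥ D.mulVec v).re) = 1 ∧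
          z = star v ⬝ᵥ D.mulVec (((Bᴴ)⁻¹ * Aᴴ).mulVec v)}) Complex.isometry_conj
    simpa using this
end
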